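/- Let M be a finite set and C a downward closed collection of subsets of M. Let X ∈ C, let a ∈ int Δ_X, let b ∈ Δ_C with b ∉ int Δ_X, and suppose the segment {(1−t)·a + t·b : t ∈ [0,1]} is contained in Δ_C. Then exactly one of the following holds: (1) supp(b) is a proper subset of X, and for every 0 < t < 1 the point (1−t)·a + t·b lies in int Δ_X (the end of the segment lies in a proper face of Δ_X); or (2) there exists Z ∈ C with X a proper subset of Z such that for every 0 < t < 1 the point (1−t)·a + t·b lies in int Δ_Z. -/

import Mathlib

/-- The realisation simplex `Δ_X ⊆ ℝ^M` spanned by a subset `X ⊆ M`. -/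
def simplexOn {M : Type*} [Fintype M] (X : Set M) : Set (M → ℝ) :=
  {l | (∀ α, 0 ≤ l α) ∧ (∑ α, l α = 1) ∧ ∀ α ∉ X, l α = 0}

/-- The interior of the simplex `Δ_X`. -/
def simplexInterior {M : Type*} [Fintype M] (X : Set M) : Set (M → ℝ) :=
  {l | l ∈ simplexOn X ∧ ∀ α ∈ X, 0 < l α}

/-- The realisation `Δ_C` of a collection `C` of subsets of `M`. -/
def realisation {M : Type*} [Fintype M] (C : Set (Set M)) : Set (M → ℝ) :=
  ⋃ X ∈ C, simplexOn X

/-- The support of a weight function. -/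
def supportOf {M : Type*} (l : M → ℝ) : Set M := {α | 0 < l α}

/-!
Write `p t = (1 - t) a + t b`. For `0 < t < 1` every coordinate in `X ∪ supp b` is positive and every
other coordinate vanishes, so `p t ∈ int Δ_{X ∪ supp b}`. If `supp b ⊆ X` this is `int Δ_X`, and
`supp b ≠ X` because `b ∉ int Δ_X`. Otherwise `Z = X ∪ supp b` strictly contains `X`, and `Z ∈ C`
because `p (1/2)` lies in some `Δ_W` with `W ∈ C`, forcing `Z ⊆ W`. The two cases exclude each other
since a point of `int Δ_Z` has support exactly `Z`.
-/

section Simplex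

variable {M : Type*} [Fintype M]

lemma supportOf_subset_of_mem_simplexOn {l : M → ℝ} {X : Set M} (hl : l ∈ simplexOn X) :
    supportOf l ⊆ X := fun α hα => by
  by_contra hαX
  exact (hα : 0 < l α).ne' (hl.2.2 α hαX)

lemma supportOf_eq_of_mem_simplexInterior {l : M → ℝ} {X : Set M} (hl : l ∈ simplexInterior X) :
    supportOf l = X :=
  (supportOf_subset_of_mem_simplexOn hl.1).antisymm hl.2

lemma mem_simplexInterior_supportOf {l : M → ℝ} {X : Set M} (hl : l ∈ simplexOn X) :
    l ∈ simplexInterior (supportOf l) := by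
  refine ⟨⟨hl.1, hl.2.1, fun α hα => ?_⟩, fun _ hα => hα⟩
  exact le_antisymm (not_lt.mp hα) (hl.1 α)

lemma convexCombination_mem_simplexInterior_union {a b : M → ℝ} {X Y : Set M}
    (ha : a ∈ simplexInterior X) (hb : b ∈ simplexInterior Y) {t : ℝ} (ht₀ : 0 < t) (ht₁ : t < 1) :
    (fun α => (1 - t) * a α + t * b α) ∈ simplexInterior (X ∪ Y) := by
  obtain ⟨⟨ha₀, ha_sum, ha_out⟩, ha_pos⟩ := ha
  obtain ⟨⟨hb₀, hb_sum, hb_out⟩, hb_pos⟩ := hb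
  have hs : 0 < 1 - t := sub_pos.mpr ht₁
  refine ⟨⟨fun α => by have := ha₀ α; have := hb₀ α; positivity, ?_, fun α hα => ?_⟩,
    fun α hα => ?_⟩
  · simp only [Finset.sum_add_distrib, ← Finset.mul_sum, ha_sum, hb_sum]
    ring
  · rw [Set.mem_union, not_or] at hα
    simp [ha_out α hα.1, hb_out α hα.2]
  · rcases hα with hαX | hαY
    · have := ha_pos α hαX; have := hb₀ α; positivity
    · have := ha₀ α; have := hb_pos α hαY; positivity

end Simplex

theorem segment_leaving_interior_dichotomy_general {M : Type*} [Fintype M]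
    (C : Set (Set M)) (hC : ∀ X ∈ C, ∀ Y ⊆ X, Y ∈ C)
    (X : Set M) (a b : M → ℝ)
    (ha : a ∈ simplexInterior X) (hb : b ∈ realisation C)
    (hb' : b ∉ simplexInterior X)
    (hseg : ∀ t ∈ Set.Icc (0 : ℝ) 1,
      (fun α => (1 - t) * a α + t * b α) ∈ realisation C) :
    Xor'
      (supportOf b ⊂ X ∧ ∀ t : ℝ, 0 < t → t < 1 →
        (fun α => (1 - t) * a α + t * b α) ∈ simplexInterior X)
      (∃ Z ∈ C, X ⊂ Z ∧ ∀ t : ℝ, 0 < t → t < 1 →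
        (fun α => (1 - t) * a α + t * b α) ∈ simplexInterior Z) := by
  obtain ⟨Y, -, hbY⟩ : ∃ Y ∈ C, b ∈ simplexOn Y := by simpa [realisation] using hb
  have hb_int := mem_simplexInterior_supportOf hbY
  have h_open_seg : ∀ t : ℝ, 0 < t → t < 1 →
      (fun α => (1 - t) * a α + t * b α) ∈ simplexInterior (X ∪ supportOf b) :=
    fun t ht₀ ht₁ => convexCombination_mem_simplexInterior_union ha hb_int ht₀ ht₁
  refine (xor_iff_or_and_not_and _ _).mpr ⟨?_, ?_⟩
  · by_cases hsub : supportOf b ⊆ X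
    · have hne : supportOf b ≠ X := fun h => hb' (h ▸ hb_int)
      rw [Set.union_eq_left.mpr hsub] at h_open_seg
      exact Or.inl ⟨hsub.ssubset_of_ne hne, h_open_seg⟩
    · obtain ⟨W, hW, hmid⟩ : ∃ W ∈ C, (fun α => (1 - 2⁻¹) * a α + 2⁻¹ * b α) ∈ simplexOn W := by
        simpa [realisation] using hseg 2⁻¹ ⟨by norm_num, by norm_num⟩
      have hZW : X ∪ supportOf b ⊆ W := by
        rw [← supportOf_eq_of_mem_simplexInterior (h_open_seg 2⁻¹ (by norm_num) (by norm_num))]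
        exact supportOf_subset_of_mem_simplexOn hmid
      exact Or.inr ⟨_, hC W hW _ hZW, Set.ssubset_union_left_iff.mpr hsub, h_open_seg⟩
  · rintro ⟨⟨-, hX_int⟩, Z, -, hXZ, hZ_int⟩
    refine hXZ.ne ?_
    rw [← supportOf_eq_of_mem_simplexInterior (hX_int 2⁻¹ (by norm_num) (by norm_num)),
      ← supportOf_eq_of_mem_simplexInterior (hZ_int 2⁻¹ (by norm_num) (by norm_num))]

/-- Dichotomy for a segment starting in the interior of `Δ_X` and ending
outside it: either the open segment stays in `int Δ_X` and its end lies in a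
proper face of `Δ_X`, or the open segment lies in the interior of `Δ_Z` for a
simplex `Z ∈ C` strictly containing `X` — and exactly one of the two holds. -/
theorem segment_leaving_interior_dichotomy {M : Type*} [Fintype M]
    (C : Set (Set M)) (hC : ∀ X ∈ C, ∀ Y ⊆ X, Y ∈ C)
    (X : Set M) (hX : X ∈ C) (a b : M → ℝ)
    (ha : a ∈ simplexInterior X) (hb : b ∈ realisation C)
    (hb' : b ∉ simplexInterior X)
    (hseg : ∀ t ∈ Set.Icc (0 : ℝ) 1,
      (fun α => (1 - t) * a α + t * b α) ∈ realisation C) :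
    Xor'
      (supportOf b ⊂ X ∧ ∀ t : ℝ, 0 < t → t < 1 →
        (fun α => (1 - t) * a α + t * b α) ∈ simplexInterior X)
      (∃ Z ∈ C, X ⊂ Z ∧ ∀ t : ℝ, 0 < t → t < 1 →
        (fun α => (1 - t) * a α + t * b α) ∈ simplexInterior Z) :=
  segment_leaving_interior_dichotomy_general C hC X a b ha hb hb' hseg
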